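/- Let n be a positive even integer and let f₁, f₂, f₃ : 𝔽₂ⁿ → 𝔽₂ be bent functions such that ν₁ = f₁ ⊕ f₂ ⊕ f₃ is bent and the dual of ν₁ equals f̃₁ ⊕ f̃₂ ⊕ f̃₃. Then for every α ∈ 𝔽₂ⁿ: W_{f₁}(α)·W_{f₂}(α)·W_{f₃}(α) = 2ⁿ·W_{ν₁}(α). -/
import Mathlib

open Finset

def chi (b : ZMod 2) : ℤ := if b = 0 then 1 else -1

def walsh {n : ℕ} (f : (Fin n → ZMod 2) → ZMod 2) (ω : Fin n → ZMod 2) : ℤ :=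
  ∑ x : Fin n → ZMod 2, chi (f x + ∑ i, ω i * x i)

def walsh2 {n m : ℕ} (f : (Fin n → ZMod 2) → (Fin m → ZMod 2) → ZMod 2)
    (α : Fin n → ZMod 2) (β : Fin m → ZMod 2) : ℤ :=
  ∑ x : Fin n → ZMod 2, ∑ y : Fin m → ZMod 2,
    chi (f x y + (∑ i, α i * x i) + (∑ j, β j * y j))

def IsBent (n : ℕ) (f : (Fin n → ZMod 2) → ZMod 2) : Prop :=
  ∀ a, walsh f a = 2 ^ (n / 2) ∨ walsh f a = -(2 ^ (n / 2))

def IsBent2 (n m : ℕ) (f : (Fin n → ZMod 2) → (Fin m → ZMod 2) → ZMod 2) : Prop :=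
  ∀ α β, walsh2 f α β = 2 ^ ((n + m) / 2) ∨ walsh2 f α β = -(2 ^ ((n + m) / 2))

def IsDual {n : ℕ} (f fd : (Fin n → ZMod 2) → ZMod 2) : Prop :=
  ∀ ω, walsh f ω = 2 ^ (n / 2) * chi (fd ω)

def IsDual2 {n m : ℕ} (f fd : (Fin n → ZMod 2) → (Fin m → ZMod 2) → ZMod 2) : Prop :=
  ∀ α β, walsh2 f α β = 2 ^ ((n + m) / 2) * chi (fd α β)

def insertAt {n : ℕ} (μ : Fin n) (b : ZMod 2) (x : Fin (n - 1) → ZMod 2) : Fin n → ZMod 2 :=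
  fun i =>
    if h : (i : ℕ) < (μ : ℕ) then x ⟨i, by have := μ.isLt; omega⟩
    else if h' : (μ : ℕ) < (i : ℕ) then x ⟨(i : ℕ) - 1, by have := i.isLt; omega⟩
    else b

def wt {n : ℕ} (ω : Fin n → ZMod 2) : ℕ := (Finset.univ.filter fun i => ω i ≠ 0).card

def Resilient {n : ℕ} (t : ℤ) (f : (Fin n → ZMod 2) → ZMod 2) : Prop :=
  ∀ ω, (wt ω : ℤ) ≤ t → walsh f ω = 0

def Resilient2 {n m : ℕ} (t : ℤ) (f : (Fin n → ZMod 2) → (Fin m → ZMod 2) → ZMod 2) : Prop :=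
  ∀ α β, (wt α + wt β : ℤ) ≤ t → walsh2 f α β = 0

lemma chi_add (a b : ZMod 2) : chi (a + b) = chi a * chi b := by
  fin_cases a <;> fin_cases b <;> decide

/-- if `f₁, f₂, f₃` and `ν₁ = f₁ ⊕ f₂ ⊕ f₃` are bent and the dual of `ν₁`
is the sum of the duals, then the product of the three Walsh transforms equals
`2ⁿ` times the Walsh transform of `ν₁`. -/
theorem walsh_product_of_dual_sum (n : ℕ) (hn0 : 0 < n) (hn : Even n)
    (f1 f2 f3 ν1 : (Fin n → ZMod 2) → ZMod 2)
    (hν1 : ∀ x, ν1 x = f1 x + f2 x + f3 x)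
    (hf1 : IsBent n f1) (hf2 : IsBent n f2) (hf3 : IsBent n f3) (hbν : IsBent n ν1)
    (d1 d2 d3 dν : (Fin n → ZMod 2) → ZMod 2)
    (hd1 : IsDual f1 d1) (hd2 : IsDual f2 d2) (hd3 : IsDual f3 d3) (hdν : IsDual ν1 dν)
    (hdual : ∀ x, dν x = d1 x + d2 x + d3 x) :
    ∀ α, walsh f1 α * walsh f2 α * walsh f3 α = 2 ^ n * walsh ν1 α := by
  intro α
  rw [hd1 α, hd2 α, hd3 α, hdν α, hdual α, chi_add, chi_add]
  have hh : n / 2 + n / 2 = n := by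
    obtain ⟨k, hk⟩ := hn; omega
  rw [show (2 : ℤ) ^ n = 2 ^ (n / 2) * 2 ^ (n / 2) by rw [← pow_add, hh]]
  ring
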